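/- For a ≥ 3 and n ≥ 2a + 8, the complement D_n^a of the a-th power of the cycle C_n contains K_{4,4} as an induced subgraph; specifically, the subgraph induced on {v_1, v_2, v_3, v_4, v_{a+5}, v_{a+6}, v_{a+7}, v_{a+8}} is isomorphic to K_{4,4}. -/

import Mathlib

/-- Cyclic distance between `i` and `j` on a cycle of length `n`. -/
def cycDist (n : ℕ) (i j : Fin n) : ℤ :=
  min |(i.val : ℤ) - (j.val : ℤ)| ((n : ℤ) - |(i.val : ℤ) - (j.val : ℤ)|)

/-- The `a`-th power of the cycle `C_n`: vertices `0, …, n−1`, with `i ~ j` iff `i ≠ j`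
and the cyclic distance between `i` and `j` is at most `a`. -/
def cyclePow (n a : ℕ) : SimpleGraph (Fin n) where
  Adj i j := i ≠ j ∧ cycDist n i j ≤ (a : ℤ)
  symm := ⟨fun i j h => ⟨h.1.symm, by simpa [cycDist, abs_sub_comm] using h.2⟩⟩
  loopless := ⟨fun i h => h.1 rfl⟩

instance (n a : ℕ) : DecidableRel (cyclePow n a).Adj :=
  fun i j => inferInstanceAs (Decidable (i ≠ j ∧ cycDist n i j ≤ (a : ℤ)))

/-- Auxiliary: map a vertex label to a side of `K_{4,4}`. -/
def gmap (a : ℕ) (x : ℕ) : Fin 4 ⊕ Fin 4 :=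
  if x = 0 then .inl 0 else if x = 1 then .inl 1 else if x = 2 then .inl 2
  else if x = 3 then .inl 3 else if x = a + 4 then .inr 0 else if x = a + 5 then .inr 1
  else if x = a + 6 then .inr 2 else .inr 3

lemma compl_cyclePow_adj (n a : ℕ) (ha : 3 ≤ a) (hn : 2 * a + 8 ≤ n) (i j : Fin n) :
    (cyclePow n a)ᶜ.Adj i j ↔
      (a < max i.val j.val - min i.val j.val ∧ a + (max i.val j.val - min i.val j.val) < n) := by
  rw [SimpleGraph.compl_adj]
  have hd : cycDist n i j =
      min ((max i.val j.val - min i.val j.val : ℕ) : ℤ)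
        ((n : ℤ) - ((max i.val j.val - min i.val j.val : ℕ) : ℤ)) := by
    unfold cycDist
    rcases abs_cases ((i.val : ℤ) - (j.val : ℤ)) with ⟨h1, h2⟩ | ⟨h1, h2⟩ <;>
      rw [h1] <;> omega
  constructor
  · rintro ⟨hne, h⟩
    have hne' : i.val ≠ j.val := fun hh => hne (Fin.ext hh)
    have : ¬ (cycDist n i j ≤ (a : ℤ)) := fun hle => h ⟨hne, hle⟩
    rw [hd] at this
    omega
  · rintro ⟨h1, h2⟩
    have hne : i ≠ j := by
      intro hh; subst hh; omega
    refine ⟨hne, ?_⟩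
    rintro ⟨-, hle⟩
    rw [hd] at hle
    omega

/-- For `a ≥ 3` and `n ≥ 2a + 8`, the subgraph of `D_n^a = (C_n^a)ᶜ` induced on the
vertices `{0,1,2,3} ∪ {a+4, a+5, a+6, a+7}` is isomorphic to `K_{4,4}`. -/
theorem stmt_13 (n a : ℕ) (ha : 3 ≤ a) (hn : 2 * a + 8 ≤ n) :
    Nonempty (((cyclePow n a)ᶜ.induce
        {v : Fin n | v.val ∈ ({0, 1, 2, 3, a + 4, a + 5, a + 6, a + 7} : Set ℕ)}) ≃g
      completeBipartiteGraph (Fin 4) (Fin 4)) := by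
  have hg0 : gmap a 0 = .inl 0 := by simp [gmap]
  have hg1 : gmap a 1 = .inl 1 := by simp [gmap]
  have hg2 : gmap a 2 = .inl 2 := by simp [gmap]
  have hg3 : gmap a 3 = .inl 3 := by simp [gmap]
  have hg4 : gmap a (a + 4) = .inr 0 := by
    unfold gmap
    rw [if_neg (by omega), if_neg (by omega), if_neg (by omega), if_neg (by omega), if_pos rfl]
  have hg5 : gmap a (a + 5) = .inr 1 := by
    unfold gmap
    rw [if_neg (by omega), if_neg (by omega), if_neg (by omega), if_neg (by omega),
      if_neg (by omega), if_pos rfl]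
  have hg6 : gmap a (a + 6) = .inr 2 := by
    unfold gmap
    rw [if_neg (by omega), if_neg (by omega), if_neg (by omega), if_neg (by omega),
      if_neg (by omega), if_neg (by omega), if_pos rfl]
  have hg7 : gmap a (a + 7) = .inr 3 := by
    unfold gmap
    rw [if_neg (by omega), if_neg (by omega), if_neg (by omega), if_neg (by omega),
      if_neg (by omega), if_neg (by omega), if_neg (by omega)]
  refine ⟨⟨⟨fun v => gmap a v.1.val, ?_, ?_, ?_⟩, ?_⟩⟩
  · exact fun s => match s with
      | .inl k => ⟨⟨k.val, by omega⟩, by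
          have := k.isLt
          simp only [Set.mem_setOf_eq, Set.mem_insert_iff, Set.mem_singleton_iff]
          omega⟩
      | .inr k => ⟨⟨a + 4 + k.val, by omega⟩, by
          have := k.isLt
          simp only [Set.mem_setOf_eq, Set.mem_insert_iff, Set.mem_singleton_iff]
          omega⟩
  · rintro ⟨⟨x, hxlt⟩, hx⟩
    simp only [Set.mem_setOf_eq, Set.mem_insert_iff, Set.mem_singleton_iff] at hx
    rcases hx with rfl | rfl | rfl | rfl | rfl | rfl | rfl | rfl <;>
      simp only [hg0, hg1, hg2, hg3, hg4, hg5, hg6, hg7] <;>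
      apply Subtype.ext <;> apply Fin.ext <;> (try simp) <;> rfl
  · rintro (k | k) <;> fin_cases k <;>
      simp only [hg0, hg1, hg2, hg3, hg4, hg5, hg6, hg7] <;> rfl
  · rintro ⟨⟨x, hxlt⟩, hx⟩ ⟨⟨y, hylt⟩, hy⟩
    simp only [Set.mem_setOf_eq, Set.mem_insert_iff, Set.mem_singleton_iff] at hx hy
    simp only [Equiv.coe_fn_mk, SimpleGraph.comap_adj, Function.Embedding.coe_subtype,
      compl_cyclePow_adj n a ha hn]
    rcases hx with rfl | rfl | rfl | rfl | rfl | rfl | rfl | rfl <;>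
      rcases hy with rfl | rfl | rfl | rfl | rfl | rfl | rfl | rfl <;>
      simp only [hg0, hg1, hg2, hg3, hg4, hg5, hg6, hg7, completeBipartiteGraph_adj,
        Sum.isLeft_inl, Sum.isRight_inr, Sum.isLeft_inr, Sum.isRight_inl] <;>
      simp <;> omega
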